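/- Let λ > 0 and let E : M → (-∞,+∞] be a proper, lower semicontinuous, λ-geodesically convex functional on a length space (M,d). Then E(v) − inf_{w ∈ M} E(w) ≤ (1/(2λ)) |D⁻E|²(v) for all v ∈ D(E). Moreover, if E has a minimizer φ, then (λ/2) d²(v,φ) ≤ E(v) − E(φ) ≤ (1/(2λ)) |D⁻E|²(v) for all v ∈ D(E). -/

import Mathlib

open MeasureTheory Set Filter Topology Metric
open scoped ENNReal

noncomputable section

/-- The positive part of an extended real number, as an element of `ℝ≥0∞`. -/
def ErealPos (x : EReal) : ℝ≥0∞ := if x = ⊤ then ⊤ else ENNReal.ofReal x.toReal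

/-- `md` is (a.e. on `S`) the metric derivative of the curve `v`. -/
def IsMetricDerivOn {X : Type*} [PseudoMetricSpace X] (v : ℝ → X) (S : Set ℝ)
    (md : ℝ → ℝ) : Prop :=
  ∀ᵐ t ∂(volume.restrict S),
    Tendsto (fun s => dist (v s) (v t) / |s - t|) (nhdsWithin t (S \ {t})) (nhds (md t))

/-- `g` is a strong upper gradient of `E` : along every absolutely continuous curve `w`
with metric derivative `mw`, `g ∘ w` is measurable and
`|E (w t) - E (w s)| ≤ ∫ₛᵗ g(w r) mw r dr`. -/
def StrongUpperGradient {X : Type*} [PseudoMetricSpace X] (E : X → EReal)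
    (g : X → ℝ≥0∞) : Prop :=
  ∀ (a b : ℝ) (w : ℝ → X) (mw : ℝ → ℝ),
    IntegrableOn mw (Ioo a b) →
    (∀ x ∈ Ioo a b, 0 ≤ mw x) →
    IsMetricDerivOn w (Ioo a b) mw →
    (∀ s t : ℝ, a < s → s ≤ t → t < b → dist (w s) (w t) ≤ ∫ r in s..t, mw r) →
    Measurable (fun t => g (w t)) ∧
      ∀ s t : ℝ, a < s → s ≤ t → t < b →
        max (E (w t) - E (w s)) (E (w s) - E (w t)) ≤
          ((∫⁻ r in Ioc s t, g (w r) * ENNReal.ofReal (mw r)) : EReal)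

/-- The time interval `(0, T)` for `T ∈ (0, +∞]`. -/
def ITo (T : EReal) : Set ℝ := {x : ℝ | 0 < x ∧ (x : EReal) < T}

/-- `v` is a `p`-gradient flow (`p`-curve of maximal slope) of `E` with respect to the
strong upper gradient `g` on `(0,T)`, with metric derivative `md`:  `v` is locally
absolutely continuous on `(0,T)`, `E ∘ v` is finite and non-increasing there, and
`d/dt E(v t) ≤ -(1/p') g^{p'}(v t) - (1/p) |v'|^p(t)` for a.e. `t ∈ (0,T)`. -/
def IsPGradientFlow {X : Type*} [PseudoMetricSpace X] (E : X → EReal) (g : X → ℝ≥0∞)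
    (p : ℝ) (T : EReal) (v : ℝ → X) (md : ℝ → ℝ) : Prop :=
  (∀ x ∈ ITo T, 0 ≤ md x) ∧
  (∀ c d : ℝ, 0 < c → c ≤ d → (d : EReal) < T → IntegrableOn md (Ioc c d)) ∧
  (∀ s t : ℝ, 0 < s → s ≤ t → (t : EReal) < T → dist (v s) (v t) ≤ ∫ r in s..t, md r) ∧
  IsMetricDerivOn v (ITo T) md ∧
  (∀ t ∈ ITo T, E (v t) ≠ ⊤ ∧ E (v t) ≠ ⊥) ∧
  AntitoneOn (fun t => (E (v t)).toReal) (ITo T) ∧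
  ∀ᵐ t ∂(volume.restrict (ITo T)), ∃ D : ℝ,
    HasDerivAt (fun s => (E (v s)).toReal) D t ∧ D ≤ 0 ∧
    g (v t) ^ (p / (p - 1)) / ENNReal.ofReal (p / (p - 1)) +
        ENNReal.ofReal (md t ^ p / p) ≤ ENNReal.ofReal (-D)

/-- `f` is absolutely continuous on the interval `[c,d]`. -/
def AbsCont (f : ℝ → ℝ) (c d : ℝ) : Prop :=
  ∀ ε > (0:ℝ), ∃ δ > (0:ℝ), ∀ n : ℕ, ∀ x y : Fin n → ℝ,
    (∀ i, c ≤ x i ∧ x i ≤ y i ∧ y i ≤ d) →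
    (Pairwise fun i j => Disjoint (Ioo (x i) (y i)) (Ioo (x j) (y j))) →
    (∑ i, (y i - x i)) < δ → (∑ i, |f (y i) - f (x i)|) < ε

/-- `X` is a length space: every two points are joined by a constant speed geodesic. -/
def IsLengthSpace (X : Type*) [PseudoMetricSpace X] : Prop :=
  ∀ u w : X, ∃ γ : ℝ → X, γ 0 = u ∧ γ 1 = w ∧
    ∀ s t : ℝ, 0 ≤ s → s ≤ t → t ≤ 1 → dist (γ s) (γ t) = (t - s) * dist u w

/-- `E` is `lam`-geodesically convex. -/
def GeodesicConvexWith {X : Type*} [PseudoMetricSpace X] (E : X → EReal) (lam : ℝ) : Prop :=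
  ∀ u w : X, E u ≠ ⊤ → E w ≠ ⊤ → ∃ γ : ℝ → X, γ 0 = u ∧ γ 1 = w ∧
    (∀ s t : ℝ, 0 ≤ s → s ≤ t → t ≤ 1 → dist (γ s) (γ t) = (t - s) * dist u w) ∧
    ∀ t : ℝ, 0 ≤ t → t ≤ 1 →
      E (γ t) ≤ ((1 - t : ℝ) : EReal) * E u + ((t : ℝ) : EReal) * E w -
        ((lam / 2 * (t * (1 - t)) * dist u w ^ 2 : ℝ) : EReal)

/-- The descending slope `|D⁻E|(u) = limsup_{w → u} (E u - E w)⁺ / d(u,w)`. -/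
def descSlope {X : Type*} [PseudoMetricSpace X] (E : X → EReal) (u : X) : ℝ≥0∞ :=
  Filter.limsup (fun w => ErealPos (E u - E w) / ENNReal.ofReal (dist u w))
    (nhdsWithin u {u}ᶜ)

/-! A `lam`-convex geodesic from `v` to `w` leaves `v` with descending slope at least
`(E v - E w) / d + (lam / 2) d`, where `d = d(v, w)`. Hence
`E v - E w ≤ |D⁻E|(v) d - (lam / 2) d² ≤ |D⁻E|²(v) / (2 lam)`, the last step being
`(|D⁻E|(v) - lam d)² ≥ 0`. Comparing `E φ` with the values of `E` along the geodesic from `w`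
to a minimizer `φ` and letting the parameter tend to `1` gives `(lam / 2) d²(w, φ) ≤ E w - E φ`. -/

lemma erealPos_coe (x : ℝ) : ErealPos (x : EReal) = ENNReal.ofReal x := by
  simp [ErealPos]

lemma EReal.sub_iInf_le_of_forall_sub_le {ι : Type*} {a : EReal} {f : ι → EReal} {c : ℝ≥0∞}
    (h : ∀ i, a - f i ≤ c) : a - ⨅ i, f i ≤ c := by
  rcases eq_or_ne c ⊤ with rfl | hc
  · simp
  have hc_bot : (c : EReal) ≠ ⊥ := EReal.coe_ennreal_ne_bot c
  have hc_top : (c : EReal) ≠ ⊤ := by simpa using hc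
  have sub_le_iff (b : EReal) : a - b ≤ c ↔ a - c ≤ b := by
    rw [EReal.sub_le_iff_le_add (.inr hc_top) (.inr hc_bot),
      EReal.sub_le_iff_le_add (.inl hc_bot) (.inl hc_top), add_comm]
  rw [sub_le_iff, le_iInf_iff]
  exact fun i => (sub_le_iff (f i)).1 (h i)

lemma le_descSlope_of_tendsto {X : Type*} [PseudoMetricSpace X] {E : X → EReal} {v : X}
    {l : Filter ℝ} [l.NeBot] {γ : ℝ → X} {q : ℝ → ℝ} {L : ℝ}
    (hγ : Tendsto γ l (𝓝[≠] v)) (hq : Tendsto q l (𝓝 L))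
    (hle : ∀ᶠ t in l,
      ENNReal.ofReal (q t) ≤ ErealPos (E v - E (γ t)) / ENNReal.ofReal (dist v (γ t))) :
    ENNReal.ofReal L ≤ descSlope E v :=
  calc ENNReal.ofReal L
      = limsup (fun t => ENNReal.ofReal (q t)) l :=
        ((ENNReal.continuous_ofReal.tendsto L).comp hq).limsup_eq.symm
    _ ≤ limsup (fun t => ErealPos (E v - E (γ t)) / ENNReal.ofReal (dist v (γ t))) l :=
        limsup_le_limsup hle
    _ ≤ descSlope E v :=
        (limsup_comp (fun w => ErealPos (E v - E w) / ENNReal.ofReal (dist v w)) γ l).le.trans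
          (limsup_le_limsup_of_le hγ)

namespace GeodesicConvexWith

variable {X : Type*} {E : X → EReal} {lam : ℝ}

lemma exists_toReal_le [PseudoMetricSpace X] (hconv : GeodesicConvexWith E lam)
    (hbot : ∀ x, E x ≠ ⊥) {u w : X} (hu : E u ≠ ⊤) (hw : E w ≠ ⊤) :
    ∃ γ : ℝ → X, ∀ t ∈ Icc (0 : ℝ) 1, dist u (γ t) = t * dist u w ∧ E (γ t) ≠ ⊤ ∧
      (E (γ t)).toReal ≤ (1 - t) * (E u).toReal + t * (E w).toReal -
        lam / 2 * (t * (1 - t)) * dist u w ^ 2 := by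
  obtain ⟨γ, hγ0, -, hγdist, hγE⟩ := hconv u w hu hw
  refine ⟨γ, fun t ⟨ht0, ht1⟩ => ⟨by simpa [hγ0] using hγdist 0 t le_rfl ht0 ht1, ?_⟩⟩
  have hle := hγE t ht0 ht1
  rw [← EReal.coe_toReal hu (hbot u), ← EReal.coe_toReal hw (hbot w)] at hle
  norm_cast at hle
  have htop : E (γ t) ≠ ⊤ := ne_top_of_le_ne_top (EReal.coe_ne_top _) hle
  refine ⟨htop, ?_⟩
  rw [← EReal.coe_toReal htop (hbot _)] at hle
  exact_mod_cast hle

lemma ofReal_le_descSlope [MetricSpace X] (hconv : GeodesicConvexWith E lam)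
    (hbot : ∀ x, E x ≠ ⊥) {v w : X} (hv : E v ≠ ⊤) (hw : E w ≠ ⊤) (hvw : v ≠ w) :
    ENNReal.ofReal (((E v).toReal - (E w).toReal) / dist v w + lam / 2 * dist v w) ≤
      descSlope E v := by
  obtain ⟨γ, hγ⟩ := hconv.exists_toReal_le hbot hv hw
  set a := (E v).toReal
  set b := (E w).toReal
  set d := dist v w
  have hd : 0 < d := dist_pos.2 hvw
  have hIoo : ∀ᶠ t in 𝓝[>] (0 : ℝ), t ∈ Ioo (0 : ℝ) 1 := Ioo_mem_nhdsGT one_pos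
  refine le_descSlope_of_tendsto (l := 𝓝[>] 0) (γ := γ)
    (q := fun t => (a - b) / d + lam / 2 * (1 - t) * d) ?_ ?_ ?_
  · rw [tendsto_nhdsWithin_iff, tendsto_iff_dist_tendsto_zero]
    constructor
    · have hlim : Tendsto (fun t : ℝ => t * d) (𝓝[>] 0) (𝓝 0) := by
        simpa using ((continuous_mul_const d).tendsto 0).mono_left nhdsWithin_le_nhds
      refine hlim.congr' ?_
      filter_upwards [hIoo] with t ht
      rw [dist_comm, (hγ t (Ioo_subset_Icc_self ht)).1]
    · filter_upwards [hIoo] with t ht hγv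
      have := (hγ t (Ioo_subset_Icc_self ht)).1
      rw [hγv, dist_self] at this
      nlinarith [ht.1]
  · simpa using ((by fun_prop : Continuous fun t : ℝ => (a - b) / d + lam / 2 * (1 - t) * d)
      |>.tendsto 0).mono_left nhdsWithin_le_nhds
  · filter_upwards [hIoo] with t ht
    obtain ⟨hdist, htop, hle⟩ := hγ t (Ioo_subset_Icc_self ht)
    have htd : 0 < t * d := mul_pos ht.1 hd
    rw [hdist, ← EReal.coe_toReal hv (hbot v), ← EReal.coe_toReal htop (hbot _),
      ← EReal.coe_sub, erealPos_coe, ← ENNReal.ofReal_div_of_pos htd]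
    refine ENNReal.ofReal_le_ofReal ((le_div_iff₀ htd).2 ?_)
    have : t * d * ((a - b) / d + lam / 2 * (1 - t) * d) =
        t * (a - b) + lam / 2 * (t * (1 - t)) * d ^ 2 := by
      field_simp
    rw [mul_comm, this]
    linarith

lemma sub_le_descSlope_sq_div [MetricSpace X] (hconv : GeodesicConvexWith E lam)
    (hlam : 0 < lam) (hbot : ∀ x, E x ≠ ⊥) {v : X} (hv : E v ≠ ⊤) (w : X) :
    E v - E w ≤ ((descSlope E v ^ 2 / ENNReal.ofReal (2 * lam) : ℝ≥0∞) : EReal) := by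
  rcases eq_or_ne (E w) ⊤ with hw | hw
  · simp [hw]
  rcases eq_or_ne (descSlope E v) ⊤ with hs | hs
  · rw [hs, ENNReal.top_pow two_ne_zero, ENNReal.top_div_of_ne_top ENNReal.ofReal_ne_top]
    simp
  set a := (E v).toReal
  set b := (E w).toReal
  set s := (descSlope E v).toReal
  rw [← EReal.coe_toReal hv (hbot v), ← EReal.coe_toReal hw (hbot w), ← EReal.coe_sub,
    ← ENNReal.ofReal_toReal hs, ← ENNReal.ofReal_pow ENNReal.toReal_nonneg,
    ← ENNReal.ofReal_div_of_pos (by positivity), EReal.coe_ennreal_ofReal]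
  refine EReal.coe_le_coe_iff.2 (le_max_of_le_left ?_)
  rcases le_or_gt (a - b) 0 with hab | hab
  · exact hab.trans (by positivity)
  have hvw : v ≠ w := fun h => by simp [a, b, h] at hab
  have hd : 0 < dist v w := dist_pos.2 hvw
  have hslope := hconv.ofReal_le_descSlope hbot hv hw hvw
  rw [← ENNReal.ofReal_toReal hs, ENNReal.ofReal_le_ofReal_iff ENNReal.toReal_nonneg] at hslope
  have hsd : a - b ≤ s * dist v w - lam / 2 * dist v w ^ 2 := by
    have := mul_le_mul_of_nonneg_right hslope hd.le
    rw [add_mul, div_mul_cancel₀ _ hd.ne'] at this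
    nlinarith
  rw [le_div_iff₀ (by positivity)]
  nlinarith [sq_nonneg (s - lam * dist v w)]

lemma half_mul_dist_sq_le_sub_of_forall_le [PseudoMetricSpace X] (hconv : GeodesicConvexWith E lam)
    (hbot : ∀ x, E x ≠ ⊥) {φ w : X} (hφ : ∀ u, E φ ≤ E u) (hw : E w ≠ ⊤) :
    ((lam / 2 * dist w φ ^ 2 : ℝ) : EReal) ≤ E w - E φ := by
  have hφtop : E φ ≠ ⊤ := ne_top_of_le_ne_top hw (hφ w)
  obtain ⟨γ, hγ⟩ := hconv.exists_toReal_le hbot hw hφtop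
  set a := (E w).toReal
  set b := (E φ).toReal
  set d := dist w φ
  have hbound : ∀ t ∈ Ioo (0 : ℝ) 1, t * (lam / 2 * d ^ 2) ≤ a - b := by
    intro t ht
    obtain ⟨-, htop, hle⟩ := hγ t (Ioo_subset_Icc_self ht)
    have hb : b ≤ (E (γ t)).toReal := EReal.toReal_le_toReal (hφ _) (hbot φ) htop
    have h1t : 0 < 1 - t := sub_pos.2 ht.2
    nlinarith
  have hlim : Tendsto (fun t : ℝ => t * (lam / 2 * d ^ 2)) (𝓝[<] 1) (𝓝 (lam / 2 * d ^ 2)) := by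
    have := (tendsto_id (x := 𝓝 (1 : ℝ))).mul_const (lam / 2 * d ^ 2)
    rw [one_mul] at this
    exact this.mono_left nhdsWithin_le_nhds
  have hreal : lam / 2 * d ^ 2 ≤ a - b :=
    le_of_tendsto hlim (by
      filter_upwards [Ioo_mem_nhdsLT (zero_lt_one' ℝ)] with t ht using hbound t ht)
  rw [← EReal.coe_toReal hw (hbot w), ← EReal.coe_toReal hφtop (hbot φ), ← EReal.coe_sub]
  exact_mod_cast hreal

end GeodesicConvexWith

theorem stmt9_general {X : Type*} [MetricSpace X]
    (E : X → EReal) (lam : ℝ) (hlam : 0 < lam)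
    (hbot : ∀ x, E x ≠ ⊥)
    (hconv : GeodesicConvexWith E lam) :
    (∀ w : X, E w ≠ ⊤ →
      E w - (⨅ u : X, E u) ≤
        ((descSlope E w ^ 2 / ENNReal.ofReal (2 * lam) : ℝ≥0∞) : EReal)) ∧
      ∀ φ : X, (∀ u, E φ ≤ E u) → ∀ w : X, E w ≠ ⊤ →
        ((lam / 2 * dist w φ ^ 2 : ℝ) : EReal) ≤ E w - E φ ∧
          E w - E φ ≤ ((descSlope E w ^ 2 / ENNReal.ofReal (2 * lam) : ℝ≥0∞) : EReal) :=
  ⟨fun _ hw => EReal.sub_iInf_le_of_forall_sub_le (hconv.sub_le_descSlope_sq_div hlam hbot hw),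
    fun _ hφ _ hw => ⟨hconv.half_mul_dist_sq_le_sub_of_forall_le hbot hφ hw,
      hconv.sub_le_descSlope_sq_div hlam hbot hw _⟩⟩

/-- For a proper lower semicontinuous `lam`-geodesically convex
functional with `lam > 0`: `E v − inf E ≤ |D⁻E|²(v)/(2 lam)` on `D(E)`, and if `φ` is a
minimizer then `(lam/2) d²(v,φ) ≤ E v − E φ ≤ |D⁻E|²(v)/(2 lam)` on `D(E)`. -/
theorem stmt9 {X : Type*} [MetricSpace X] (hlen : IsLengthSpace X)
    (E : X → EReal) (lam : ℝ) (hlam : 0 < lam)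
    (hproper : ∃ x, E x ≠ ⊤) (hbot : ∀ x, E x ≠ ⊥)
    (hlsc : LowerSemicontinuous E)
    (hconv : GeodesicConvexWith E lam) :
    (∀ w : X, E w ≠ ⊤ →
      E w - (⨅ u : X, E u) ≤
        ((descSlope E w ^ 2 / ENNReal.ofReal (2 * lam) : ℝ≥0∞) : EReal)) ∧
      ∀ φ : X, (∀ u, E φ ≤ E u) → ∀ w : X, E w ≠ ⊤ →
        ((lam / 2 * dist w φ ^ 2 : ℝ) : EReal) ≤ E w - E φ ∧
          E w - E φ ≤ ((descSlope E w ^ 2 / ENNReal.ofReal (2 * lam) : ℝ≥0∞) : EReal) :=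
  stmt9_general E lam hlam hbot hconv
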